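/- arXiv:1708.03833 — 2 statements merged into one kernel-verified Lean document; each statement's English description precedes it below -/
import Mathlib

section
/- Let X_1, …, X_T be i.i.d. random variables with values in a finite set Θ and common distribution p̃, let Θ_0 ⊆ Θ, let q = (q_θ)_{θ∈Θ} be a real-valued quality vector, and let Q_T = Σ_{θ∈Θ_T} q_θ where Θ_T = Θ_0 ∪ {X_1, …, X_T} and Q_0 = Σ_{θ∈Θ_0} q_θ. Then E[Q_T] = Q_0 − Σ_{k=1}^{T} (−1)^k · C(T,k) · D^k_{Θ_0}(p̃, q), where D^k_{Θ_0}(p̃, q) = Σ_{θ∉Θ_0} q_θ · p̃_θ^k. -/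
open Finset

/-- The `k`-th order quality-prevalence function
`D^k_{Θ₀}(p, q) = ∑_{θ∉Θ₀} q_θ p_θ^k`. -/
def qualityPrevalence {Θ : Type*} [Fintype Θ] [DecidableEq Θ]
    (Θ0 : Finset Θ) (p q : Θ → ℝ) (k : ℕ) : ℝ :=
  ∑ θ ∈ Θ0ᶜ, q θ * p θ ^ k

lemma binom_aux (r : ℝ) (T : ℕ) :
    1 - (1 - r) ^ T = -∑ k ∈ Finset.Icc 1 T, (-1 : ℝ) ^ k * (T.choose k : ℝ) * r ^ k := by
  have h1 : (1 - r) ^ T = ∑ k ∈ Finset.range (T + 1), (-r) ^ k * (T.choose k : ℝ) := by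
    rw [show (1 : ℝ) - r = -r + 1 by ring, add_pow]
    simp
  have hins : Finset.range (T + 1) = insert 0 (Finset.Icc 1 T) := by
    ext k; simp [Finset.mem_range, Finset.mem_Icc]; omega
  rw [h1, hins, Finset.sum_insert (by simp)]
  have : ∀ k ∈ Finset.Icc 1 T, (-r) ^ k * (T.choose k : ℝ)
      = (-1 : ℝ) ^ k * (T.choose k : ℝ) * r ^ k := by
    intro k _; rw [neg_pow]; ring
  rw [Finset.sum_congr rfl this]
  simp only [pow_zero, Nat.choose_zero_right, Nat.cast_one, mul_one, one_mul]; ring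

/-- Proposition 2: the expected total quality of `Θ₀ ∪ {X₁,…,X_T}` for i.i.d.
draws with pmf `p` equals `Q₀ - ∑_{k=1}^T (-1)^k C(T,k) D^k_{Θ₀}(p,q)`. -/
theorem expected_quality_alternating_sum
    {Θ : Type*} [Fintype Θ] [DecidableEq Θ]
    (p : Θ → ℝ) (hp : ∀ θ, 0 ≤ p θ) (hsum : ∑ θ, p θ = 1)
    (q : Θ → ℝ) (Θ0 : Finset Θ) (T : ℕ) :
    ∑ x : Fin T → Θ, (∏ i, p (x i)) *
        (∑ θ ∈ Θ0 ∪ Finset.image x Finset.univ, q θ)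
      = (∑ θ ∈ Θ0, q θ)
        - ∑ k ∈ Finset.Icc 1 T,
            (-1 : ℝ) ^ k * (T.choose k : ℝ) * qualityPrevalence Θ0 p q k := by
  classical
  -- total mass of the product measure is 1
  have hsum_all : ∑ x : Fin T → Θ, (∏ i, p (x i)) = 1 := by
    have h := Finset.prod_univ_sum (fun _ : Fin T => (Finset.univ : Finset Θ))
      (fun _ θ => p θ)
    rw [Fintype.piFinset_univ] at h
    rw [← h]
    simp [hsum]
  -- probability that θ is missed by all T draws
  have hmiss : ∀ θ : Θ,
      ∑ x ∈ Finset.univ.filter (fun x : Fin T → Θ => θ ∉ Finset.image x Finset.univ),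
        (∏ i, p (x i)) = (1 - p θ) ^ T := by
    intro θ
    have hfilter : Finset.univ.filter (fun x : Fin T → Θ => θ ∉ Finset.image x Finset.univ)
        = Fintype.piFinset (fun _ : Fin T => ({θ}ᶜ : Finset Θ)) := by
      ext x
      simp [Fintype.mem_piFinset, Finset.mem_image, eq_comm]
    have hcompl : ∑ θ' ∈ ({θ}ᶜ : Finset Θ), p θ' = 1 - p θ := by
      have := Finset.sum_compl_add_sum ({θ} : Finset Θ) p
      simp at this
      linarith [hsum ▸ this]
    have h := Finset.prod_univ_sum (fun _ : Fin T => ({θ}ᶜ : Finset Θ))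
      (fun _ θ' => p θ')
    rw [hfilter, ← h]
    simp [hcompl]
  -- per-θ expectation of indicator
  have key : ∀ θ : Θ,
      ∑ x : Fin T → Θ, (∏ i, p (x i)) *
        (if θ ∈ Θ0 ∪ Finset.image x Finset.univ then q θ else 0)
      = q θ * (if θ ∈ Θ0 then 1 else 1 - (1 - p θ) ^ T) := by
    intro θ
    by_cases hθ : θ ∈ Θ0
    · simp only [Finset.mem_union, hθ, true_or, if_true]
      rw [mul_one, ← Finset.sum_mul, hsum_all, one_mul]
    · simp only [Finset.mem_union, hθ, false_or, if_neg hθ]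
      have hsplit := Finset.sum_filter_add_sum_filter_not Finset.univ
        (fun x : Fin T → Θ => θ ∈ Finset.image x Finset.univ)
        (fun x => ∏ i, p (x i))
      rw [hsum_all] at hsplit
      have hnot : Finset.univ.filter (fun x : Fin T → Θ => ¬ θ ∈ Finset.image x Finset.univ)
          = Finset.univ.filter (fun x : Fin T → Θ => θ ∉ Finset.image x Finset.univ) := rfl
      rw [hnot, hmiss θ] at hsplit
      have hhit : ∑ x ∈ Finset.univ.filter
          (fun x : Fin T → Θ => θ ∈ Finset.image x Finset.univ), (∏ i, p (x i))
          = 1 - (1 - p θ) ^ T := by linarith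
      calc ∑ x : Fin T → Θ, (∏ i, p (x i)) *
            (if θ ∈ Finset.image x Finset.univ then q θ else 0)
          = ∑ x : Fin T → Θ,
            (if θ ∈ Finset.image x Finset.univ then (∏ i, p (x i)) * q θ else 0) := by
            apply Finset.sum_congr rfl; intro x _
            split <;> simp
        _ = ∑ x ∈ Finset.univ.filter
            (fun x : Fin T → Θ => θ ∈ Finset.image x Finset.univ),
              (∏ i, p (x i)) * q θ := by rw [Finset.sum_filter]
        _ = (∑ x ∈ Finset.univ.filter
            (fun x : Fin T → Θ => θ ∈ Finset.image x Finset.univ),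
              (∏ i, p (x i))) * q θ := by rw [Finset.sum_mul]
        _ = q θ * (1 - (1 - p θ) ^ T) := by rw [hhit]; ring
  -- rewrite LHS
  have lhs_eq : ∑ x : Fin T → Θ, (∏ i, p (x i)) *
        (∑ θ ∈ Θ0 ∪ Finset.image x Finset.univ, q θ)
      = ∑ θ : Θ, q θ * (if θ ∈ Θ0 then 1 else 1 - (1 - p θ) ^ T) := by
    have h1 : ∀ x : Fin T → Θ, ∑ θ ∈ Θ0 ∪ Finset.image x Finset.univ, q θ
        = ∑ θ : Θ, if θ ∈ Θ0 ∪ Finset.image x Finset.univ then q θ else 0 := by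
      intro x
      rw [Finset.sum_ite_mem, Finset.univ_inter]
    calc ∑ x : Fin T → Θ, (∏ i, p (x i)) *
          (∑ θ ∈ Θ0 ∪ Finset.image x Finset.univ, q θ)
        = ∑ x : Fin T → Θ, ∑ θ : Θ, (∏ i, p (x i)) *
            (if θ ∈ Θ0 ∪ Finset.image x Finset.univ then q θ else 0) := by
          apply Finset.sum_congr rfl; intro x _
          rw [h1 x, Finset.mul_sum]
      _ = ∑ θ : Θ, ∑ x : Fin T → Θ, (∏ i, p (x i)) *
            (if θ ∈ Θ0 ∪ Finset.image x Finset.univ then q θ else 0) :=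
          Finset.sum_comm
      _ = ∑ θ : Θ, q θ * (if θ ∈ Θ0 then 1 else 1 - (1 - p θ) ^ T) := by
          exact Finset.sum_congr rfl fun θ _ => key θ
  rw [lhs_eq]
  -- split over Θ0 and its complement
  have hsplit : ∑ θ : Θ, q θ * (if θ ∈ Θ0 then 1 else 1 - (1 - p θ) ^ T)
      = (∑ θ ∈ Θ0, q θ) + ∑ θ ∈ Θ0ᶜ, q θ * (1 - (1 - p θ) ^ T) := by
    rw [← Finset.sum_compl_add_sum Θ0
      (fun θ => q θ * (if θ ∈ Θ0 then 1 else 1 - (1 - p θ) ^ T))]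
    have h1 : ∑ θ ∈ Θ0ᶜ, q θ * (if θ ∈ Θ0 then 1 else 1 - (1 - p θ) ^ T)
        = ∑ θ ∈ Θ0ᶜ, q θ * (1 - (1 - p θ) ^ T) := by
      apply Finset.sum_congr rfl; intro θ hθ
      rw [Finset.mem_compl] at hθ
      rw [if_neg hθ]
    have h2 : ∑ θ ∈ Θ0, q θ * (if θ ∈ Θ0 then 1 else 1 - (1 - p θ) ^ T)
        = ∑ θ ∈ Θ0, q θ := by
      apply Finset.sum_congr rfl; intro θ hθ
      rw [if_pos hθ, mul_one]
    rw [h1, h2]; ring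
  rw [hsplit]
  -- handle the RHS alternating sum
  have hrhs : ∑ k ∈ Finset.Icc 1 T,
      (-1 : ℝ) ^ k * (T.choose k : ℝ) * qualityPrevalence Θ0 p q k
      = ∑ θ ∈ Θ0ᶜ, ∑ k ∈ Finset.Icc 1 T,
          q θ * ((-1 : ℝ) ^ k * (T.choose k : ℝ) * p θ ^ k) := by
    rw [Finset.sum_comm]
    apply Finset.sum_congr rfl; intro k _
    rw [qualityPrevalence, Finset.mul_sum]
    apply Finset.sum_congr rfl; intro θ _
    ring
  rw [hrhs]
  rw [sub_eq_add_neg, ← Finset.sum_neg_distrib]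
  congr 1
  apply Finset.sum_congr rfl
  intro θ _
  rw [← Finset.mul_sum, ← mul_neg, ← binom_aux (p θ) T]
end

section
/- Let Θ be a finite set, p̃ a probability mass function on Θ, and Θ_0 ⊆ Θ. Let θ ∈ Θ_0 and θ' ∉ Θ_0 with p̃_{θ'} ≤ p̃_θ, and let Θ_0' = (Θ_0 \ {θ}) ∪ {θ'}. Then for every T ≥ 0, the expected number of known elements after T i.i.d. draws from p̃ satisfies E[|Θ_0' ∪ {X_1,…,X_T}|] ≥ E[|Θ_0 ∪ {X_1,…,X_T}|]; that is, initially knowing the rarer element yields at least as large an expected knowledge base at every time. -/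
/-!
By linearity of expectation, the expected size of `S ∪ {X₁, …, X_T}` is
`|S| + ∑_{b ∉ S} (1 - (1 - p b) ^ T)`, the summand being the probability that `b` is drawn.
Swapping `θ ∈ S` for `θ' ∉ S` keeps `|S|` and replaces the summand of `θ'` by that of `θ`,
which is at least as large because `q ↦ 1 - (1 - q) ^ T` is monotone on `[0, 1]`.
-/

open Finset

section Coverage

variable {Θ : Type*} [Fintype Θ] [DecidableEq Θ]

theorem sum_prod_mul_ite_notMem_image_eq_pow (p : Θ → ℝ) (b : Θ) (T : ℕ) :
    ∑ x : Fin T → Θ, (∏ i, p (x i)) * (if b ∉ image x univ then 1 else 0)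
      = (∑ a, p a - p b) ^ T := by
  have hmiss : ∀ x : Fin T → Θ, (∏ i, p (x i)) * (if b ∉ image x univ then 1 else 0)
      = ∏ i, Function.update p b 0 (x i) := by
    intro x
    split_ifs with hb
    · obtain ⟨i, -, rfl⟩ := mem_image.mp hb
      rw [mul_zero, eq_comm]
      exact prod_eq_zero (mem_univ i) (by simp)
    · rw [mul_one]
      refine prod_congr rfl fun i _ => ?_
      rw [Function.update_of_ne fun h => hb (mem_image.mpr ⟨i, mem_univ i, h⟩)]
  rw [sum_congr rfl fun x _ => hmiss x, ← Fintype.sum_pow, sum_update_of_mem (mem_univ b),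
    ← add_sum_erase univ p (mem_univ b), sdiff_singleton_eq_erase, zero_add, add_sub_cancel_left]

theorem card_union_eq_card_add_sum_compl (S A : Finset Θ) :
    #(S ∪ A) = #S + ∑ b ∈ Sᶜ, if b ∈ A then 1 else 0 := by
  rw [union_comm, ← card_sdiff_add_card, add_comm, sum_boole, Nat.cast_id]
  congr 2
  ext b
  simp [and_comm]

theorem expected_card_union_image (p : Θ → ℝ) (hsum : ∑ a, p a = 1) (S : Finset Θ) (T : ℕ) :
    ∑ x : Fin T → Θ, (∏ i, p (x i)) * (#(S ∪ image x univ) : ℝ)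
      = #S + ∑ b ∈ Sᶜ, (1 - (1 - p b) ^ T) := by
  have htotal : ∑ x : Fin T → Θ, ∏ i, p (x i) = 1 := by
    rw [← Fintype.sum_pow, hsum, one_pow]
  have hhit : ∀ b, ∑ x : Fin T → Θ, (∏ i, p (x i)) * (if b ∈ image x univ then 1 else 0)
      = 1 - (1 - p b) ^ T := by
    intro b
    calc ∑ x : Fin T → Θ, (∏ i, p (x i)) * (if b ∈ image x univ then 1 else 0)
        = ∑ x : Fin T → Θ,
            ((∏ i, p (x i)) - (∏ i, p (x i)) * (if b ∉ image x univ then 1 else 0)) := by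
          refine sum_congr rfl fun x _ => ?_
          split_ifs <;> simp_all
      _ = 1 - (1 - p b) ^ T := by
          rw [sum_sub_distrib, htotal, sum_prod_mul_ite_notMem_image_eq_pow, hsum]
  simp_rw [card_union_eq_card_add_sum_compl, Nat.cast_add, Nat.cast_sum, mul_add, sum_add_distrib,
    ← sum_mul, htotal, one_mul, mul_sum, sum_comm (s := univ), Nat.cast_ite, Nat.cast_one,
    Nat.cast_zero, hhit]

theorem sum_compl_le_sum_compl_insert_erase (f : Θ → ℝ) {S : Finset Θ} {a a' : Θ}
    (ha : a ∈ S) (ha' : a' ∉ S) (hf : f a' ≤ f a) :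
    ∑ b ∈ Sᶜ, f b ≤ ∑ b ∈ (insert a' (S.erase a))ᶜ, f b := by
  have hS := sum_compl_add_sum S f
  have hS' := sum_compl_add_sum (insert a' (S.erase a)) f
  rw [sum_insert fun h => ha' (mem_of_mem_erase h)] at hS'
  rw [← add_sum_erase S f ha] at hS
  linarith

end Coverage

/-- Knowing a rarer element initially yields at least as large an expected
knowledge base at every time: swapping a known element `θ` for an unknown
element `θ'` with `p θ' ≤ p θ` cannot decrease `E[|Θ₀ ∪ {X₁,…,X_T}|]`. -/
theorem knowing_rare_elements_is_better
    {Θ : Type*} [Fintype Θ] [DecidableEq Θ]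
    (p : Θ → ℝ) (hp : ∀ θ, 0 ≤ p θ) (hsum : ∑ θ, p θ = 1)
    (Θ0 : Finset Θ) (θ θ' : Θ) (hθ : θ ∈ Θ0) (hθ' : θ' ∉ Θ0)
    (hle : p θ' ≤ p θ) (T : ℕ) :
    ∑ x : Fin T → Θ, (∏ i, p (x i)) *
        ((Θ0 ∪ Finset.image x Finset.univ).card : ℝ)
      ≤ ∑ x : Fin T → Θ, (∏ i, p (x i)) *
          ((((Θ0 \ {θ}) ∪ {θ'}) ∪ Finset.image x Finset.univ).card : ℝ) := by
  have hswap : Θ0 \ {θ} ∪ {θ'} = insert θ' (Θ0.erase θ) := by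
    rw [sdiff_singleton_eq_erase, union_comm, ← insert_eq]
  have hcard : #(insert θ' (Θ0.erase θ)) = #Θ0 := by
    rw [card_insert_of_notMem fun h => hθ' (mem_of_mem_erase h), card_erase_add_one hθ]
  have hpθ : p θ ≤ 1 := hsum ▸ single_le_sum (fun a _ => hp a) (mem_univ θ)
  rw [expected_card_union_image p hsum, expected_card_union_image p hsum, hswap, hcard,
    add_le_add_iff_left]
  refine sum_compl_le_sum_compl_insert_erase (fun b => 1 - (1 - p b) ^ T) hθ hθ' ?_
  gcongr
end
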